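/- Let q ≥ 3, z ∈ 𝕋ⁿ, and suppose H_{k−1}(z) conj(H_{i+k−1}(z)) ≠ 0 for all k = 1,…,q−1 and i = 1,…,q−k. Then the matrix F̃(Φ_H(z)) (the stack of F₁(Φ_H(z)),…,F_{q−1}(Φ_H(z)), evaluated at z) has rank exactly q. -/
import Mathlib


open Matrix Complex

/-- The LP² matrix `Φ_H = [H, I − H H*]` built from the vector of values
`h = H(z)` at a point `z ∈ 𝕋ⁿ`. -/
noncomputable def PhiV {q : ℕ} (h : Fin q → ℂ) : Matrix (Fin q) (Fin (q + 1)) ℂ :=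
  Matrix.of fun i j =>
    if hj : j = 0 then h i
    else (if i = j.pred hj then (1 : ℂ) else 0) - h i * (starRingEnd ℂ) (h (j.pred hj))

/-- Row index set for the stacked blocks `F₁, …, F_{q−1}`: pairs `(k, i)`
with `1 ≤ k`, `1 ≤ i` and `i ≤ q − k`. -/
def RIdx (q : ℕ) :=
  {p : Fin q × Fin q // 1 ≤ (p.1 : ℕ) ∧ 1 ≤ (p.2 : ℕ) ∧ (p.2 : ℕ) ≤ q - (p.1 : ℕ)}

instance (q : ℕ) : Fintype (RIdx q) := by unfold RIdx; infer_instance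

/-- The index `k − 1` (0-based) attached to a row `(k, i)`. -/
def kIdx {q : ℕ} (p : RIdx q) : Fin q :=
  ⟨(p.1.1 : ℕ) - 1, lt_of_le_of_lt (Nat.sub_le _ _) p.1.1.isLt⟩

/-- The index `i + k − 1` (0-based) attached to a row `(k, i)`. -/
def ikIdx {q : ℕ} (p : RIdx q) : Fin q :=
  ⟨(p.1.2 : ℕ) + (p.1.1 : ℕ) - 1, by
    obtain ⟨hk, hi, hik⟩ := p.2
    have h1 := p.1.1.isLt
    have h2 := p.1.2.isLt
    omega⟩

/-- The stacked matrix `F̃(Φ_H) = [F₁(Φ_H); …; F_{q−1}(Φ_H)]`: row `(k, i)`,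
column `j` is `Φ_{k−1, j} ⋅ conj (Φ_{i+k−1, j})`. -/
noncomputable def Ftilde {q : ℕ} (h : Fin q → ℂ) : Matrix (RIdx q) (Fin (q + 1)) ℂ :=
  fun p j => PhiV h (kIdx p) j * (starRingEnd ℂ) (PhiV h (ikIdx p) j)

lemma PhiV_zero {q : ℕ} (h : Fin q → ℂ) (i : Fin q) : PhiV h i 0 = h i := by
  simp [PhiV]

lemma PhiV_succ {q : ℕ} (h : Fin q → ℂ) (i m : Fin q) :
    PhiV h i m.succ = (if i = m then (1:ℂ) else 0) - h i * (starRingEnd ℂ) (h m) := by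
  simp [PhiV, Fin.succ_ne_zero]

lemma conj_entry (t : Prop) [Decidable t] (c d : ℂ) :
    (starRingEnd ℂ) ((if t then (1:ℂ) else 0) - c * (starRingEnd ℂ) d) =
      (if t then (1:ℂ) else 0) - (starRingEnd ℂ) c * d := by
  split_ifs <;> simp

lemma kIdx_ne_ikIdx {q : ℕ} (p : RIdx q) : kIdx p ≠ ikIdx p := by
  obtain ⟨hk, hi, hik⟩ := p.2
  simp only [kIdx, ikIdx, Ne, Fin.mk.injEq]
  omega

lemma mulVec_Ftilde {q : ℕ} (h : Fin q → ℂ) (x : Fin (q + 1) → ℂ) (p : RIdx q) :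
    (Ftilde h).mulVec x p =
      h (kIdx p) * (starRingEnd ℂ) (h (ikIdx p)) *
        (x 0 - x (kIdx p).succ - x (ikIdx p).succ
          + ∑ m, (starRingEnd ℂ) (h m) * h m * x m.succ) := by
  set a := kIdx p with ha
  set b := ikIdx p with hb
  have hab : a ≠ b := kIdx_ne_ikIdx p
  have key : ∀ m : Fin q, Ftilde h p m.succ * x m.succ =
      h a * (starRingEnd ℂ) (h b) * ((starRingEnd ℂ) (h m) * h m * x m.succ)
      - (if m = a then (starRingEnd ℂ) (h b) * (h a * x m.succ) else 0)
      - (if m = b then h a * ((starRingEnd ℂ) (h b) * x m.succ) else 0) := by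
    intro m
    simp only [Ftilde, ← ha, ← hb, PhiV_succ, conj_entry]
    by_cases hma : a = m <;> by_cases hmb : b = m
    · exact absurd (hma.trans hmb.symm) hab
    · subst hma
      rw [if_pos rfl, if_neg hmb, if_pos rfl, if_neg (fun hh => hmb hh.symm)]
      ring
    · subst hmb
      rw [if_neg hma, if_pos rfl, if_neg (fun hh => hma hh.symm), if_pos rfl]
      ring
    · rw [if_neg hma, if_neg hmb, if_neg (fun hh => hma hh.symm),
        if_neg (fun hh => hmb hh.symm)]
      ring
  have h0 : Ftilde h p 0 = h a * (starRingEnd ℂ) (h b) := by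
    simp only [Ftilde, ← ha, ← hb, PhiV_zero]
  rw [Matrix.mulVec, dotProduct, Fin.sum_univ_succ, h0,
    Finset.sum_congr rfl (fun m _ => key m)]
  rw [Finset.sum_sub_distrib, Finset.sum_sub_distrib, Finset.sum_ite_eq' Finset.univ a,
    Finset.sum_ite_eq' Finset.univ b, if_pos (Finset.mem_univ a), if_pos (Finset.mem_univ b),
    ← Finset.mul_sum]
  ring

/-- if `q ≥ 3` and `H_{k−1}(z) ⋅ conj (H_{i+k−1}(z)) ≠ 0` for all
`k = 1, …, q−1` and `i = 1, …, q−k`, then `F̃(Φ_H(z))` has rank exactly `q`. -/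
theorem Ftilde_rank (q : ℕ) (hq : 3 ≤ q) (h : Fin q → ℂ)
    (hnz : ∀ p : RIdx q, h (kIdx p) * (starRingEnd ℂ) (h (ikIdx p)) ≠ 0) :
    (Ftilde h).rank = q := by
  classical
  set S : ℂ := ∑ m, (starRingEnd ℂ) (h m) * h m with hS
  set v : Fin (q + 1) → ℂ := fun j => if j = 0 then 2 - S else 1 with hv
  have hvsucc : ∀ m : Fin q, v m.succ = 1 := fun m => if_neg (Fin.succ_ne_zero m)
  have hvne : v ≠ 0 := by
    intro hz
    have : v (⟨0, by omega⟩ : Fin q).succ = 0 := by rw [hz]; rfl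
    rw [hvsucc] at this
    exact one_ne_zero this
  have hker : LinearMap.ker (Ftilde h).mulVecLin = Submodule.span ℂ {v} := by
    apply le_antisymm
    · -- ker ≤ span
      intro x hx
      rw [LinearMap.mem_ker] at hx
      set T : ℂ := ∑ m, (starRingEnd ℂ) (h m) * h m * x m.succ with hT
      have E : ∀ a b : Fin q, (a : ℕ) < (b : ℕ) → x a.succ + x b.succ = x 0 + T := by
        intro a b hab
        have haq := a.isLt; have hbq := b.isLt
        set p : RIdx q := ⟨(⟨(a : ℕ) + 1, by omega⟩, ⟨(b : ℕ) - (a : ℕ), by omega⟩),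
          by refine ⟨?_, ?_, ?_⟩ <;> simp <;> omega⟩ with hp
        have hka : kIdx p = a := by simp [kIdx, hp]
        have hkb : ikIdx p = b := by
          simp only [ikIdx, hp]; exact Fin.ext (by simp; omega)
        have h1 : (Ftilde h).mulVec x p = 0 := by
          rw [← Matrix.mulVecLin_apply, hx]; rfl
        rw [mulVec_Ftilde, hka, hkb] at h1
        have h2 := (mul_eq_zero.mp h1).resolve_left (by rw [← hka, ← hkb]; exact hnz p)
        rw [← hT] at h2
        linear_combination -h2
      have Esym : ∀ a b : Fin q, a ≠ b → x a.succ + x b.succ = x 0 + T := by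
        intro a b hab
        rcases lt_or_gt_of_ne (fun hh : (a : ℕ) = (b : ℕ) => hab (Fin.ext hh)) with hlt | hgt
        · exact E a b hlt
        · rw [add_comm]; exact E b a hgt
      have key2 : ∀ m n : Fin q, x m.succ = x n.succ := by
        intro m n
        rcases eq_or_ne m n with rfl | hmn
        · rfl
        have hmn' : (m : ℕ) ≠ (n : ℕ) := fun hh => hmn (Fin.ext hh)
        have hmq := m.isLt; have hnq := n.isLt
        obtain ⟨l, hlm, hln⟩ : ∃ l : Fin q, l ≠ m ∧ l ≠ n := by
          by_cases h0 : (m : ℕ) ≠ 0 ∧ (n : ℕ) ≠ 0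
          · exact ⟨⟨0, by omega⟩, fun hh => h0.1 (by rw [← hh]),
              fun hh => h0.2 (by rw [← hh])⟩
          by_cases h1 : (m : ℕ) ≠ 1 ∧ (n : ℕ) ≠ 1
          · exact ⟨⟨1, by omega⟩, fun hh => h1.1 (by rw [← hh]),
              fun hh => h1.2 (by rw [← hh])⟩
          refine ⟨⟨2, by omega⟩, fun hh => ?_, fun hh => ?_⟩ <;>
            (have := congrArg Fin.val hh; simp at this h0 h1; omega)
        have e1 := Esym m l (Ne.symm hlm)
        have e2 := Esym n l (Ne.symm hln)
        linear_combination e1 - e2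
      set z0 : Fin q := ⟨0, by omega⟩ with hz0
      set t : ℂ := x z0.succ with ht
      have hTt : T = S * t := by
        rw [hT, hS, Finset.sum_mul]
        exact Finset.sum_congr rfl (fun m _ => by rw [key2 m z0, ← ht, mul_assoc])
      have hx0 : x 0 = (2 - S) * t := by
        have e := Esym z0 ⟨1, by omega⟩ (fun hh => by
          have := congrArg Fin.val hh; simp [hz0] at this)
        rw [key2 ⟨1, by omega⟩ z0, ← ht, hTt] at e
        linear_combination -e
      rw [Submodule.mem_span_singleton]
      refine ⟨t, funext fun j => ?_⟩
      refine Fin.cases ?_ (fun m => ?_) j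
      · have hv0 : v 0 = 2 - S := if_pos rfl
        simp only [Pi.smul_apply, smul_eq_mul, hx0, hv0]; ring
      · simp only [Pi.smul_apply, hvsucc, smul_eq_mul, mul_one, key2 m z0, ← ht]
    · -- span ≤ ker
      rw [Submodule.span_singleton_le_iff_mem, LinearMap.mem_ker]
      apply funext
      intro p
      rw [Matrix.mulVecLin_apply, mulVec_Ftilde]
      have : v 0 - v (kIdx p).succ - v (ikIdx p).succ
          + ∑ m, (starRingEnd ℂ) (h m) * h m * v m.succ = 0 := by
        have : ∀ m : Fin q, (starRingEnd ℂ) (h m) * h m * v m.succ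
            = (starRingEnd ℂ) (h m) * h m := fun m => by rw [hvsucc, mul_one]
        rw [Finset.sum_congr rfl (fun m _ => this m), hvsucc, hvsucc, ← hS]
        show (2 - S) - 1 - 1 + S = 0
        ring
      rw [this, mul_zero]; rfl
  have hrank : (Ftilde h).rank = Module.finrank ℂ (LinearMap.range (Ftilde h).mulVecLin) := rfl
  have hrn := LinearMap.finrank_range_add_finrank_ker (Ftilde h).mulVecLin
  rw [hker, finrank_span_singleton hvne] at hrn
  have hpi : Module.finrank ℂ (Fin (q + 1) → ℂ) = q + 1 := by simp
  rw [hpi] at hrn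
  omega
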